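/- Suppose the submatrix of F_d ⊗ F_d formed by the rows indexed by Ω ⊂ ℤ_d×ℤ_d is full spark. Then so is the submatrix of F_d ⊗ F_d formed by the rows indexed by: (1) Ω + (s,p) = {(i+s, j+p) : (i,j) ∈ Ω} for any (s,p) ∈ ℤ_d×ℤ_d; (2) (c_1,c_2)Ω = {(c_1 i, c_2 j) : (i,j) ∈ Ω} for any c_1, c_2 ∈ ℤ_d both coprime to d; (3) the complement Ω^c = (ℤ_d×ℤ_d) ∖ Ω. -/
import Mathlib


open Matrix

/-- Unnormalized 2D discrete Fourier transform of `a : ℤ_d × ℤ_d → ℂ`. -/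
noncomputable def hatKer2 (d : ℕ) [NeZero d] (a : ZMod d × ZMod d → ℂ) :
    ZMod d × ZMod d → ℂ :=
  fun j => ∑ k : ZMod d × ZMod d,
    a k * Complex.exp (-(2 * (Real.pi : ℂ) * Complex.I) *
      ((j.1.val : ℂ) * (k.1.val : ℂ) + (j.2.val : ℂ) * (k.2.val : ℂ)) / (d : ℂ))

/-- The 2D circular convolution operator with kernel `a`, as a matrix. -/
def convMat2 (d : ℕ) (a : ZMod d × ZMod d → ℂ) :
    Matrix (ZMod d × ZMod d) (ZMod d × ZMod d) ℂ :=
  Matrix.of fun k i => a (k - i)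

/-- The Kronecker product `F_d ⊗ F_d`: its entry at `((i₁,i₂),(j₁,j₂))` is
`(1/d) ω_d^{i₁j₁ + i₂j₂}`. -/
noncomputable def F2Mat (d : ℕ) : Matrix (ZMod d × ZMod d) (ZMod d × ZMod d) ℂ :=
  Matrix.of fun i j => ((d : ℂ))⁻¹ * Complex.exp (-(2 * (Real.pi : ℂ) * Complex.I) *
    ((i.1.val : ℂ) * (j.1.val : ℂ) + (i.2.val : ℂ) * (j.2.val : ℂ)) / (d : ℂ))

/-- A matrix `M : Matrix ι κ ℂ` (with `#ι ≤ #κ`) is full spark when every choice of `#ι`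
columns is linearly independent, i.e. every maximal square submatrix is invertible. -/
def FullSpark {ι κ : Type*} [Fintype ι] [Fintype κ] (M : Matrix ι κ ℂ) : Prop :=
  ∀ S : Finset κ, S.card = Fintype.card ι →
    LinearIndependent ℂ (fun k : S => fun i : ι => M i (k : κ))

noncomputable def Bk (d : ℕ) [NeZero d] (i q : ZMod d × ZMod d) : ℂ :=
  ZMod.stdAddChar (-(i.1 * q.1 + i.2 * q.2))

lemma Bk_symm (d : ℕ) [NeZero d] (i q : ZMod d × ZMod d) : Bk d i q = Bk d q i := by
  unfold Bk; ring_nf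

lemma Bk_add_left (d : ℕ) [NeZero d] (i j q : ZMod d × ZMod d) :
    Bk d (i + j) q = Bk d i q * Bk d j q := by
  unfold Bk
  rw [← AddChar.map_add_eq_mul]
  congr 1
  simp only [Prod.fst_add, Prod.snd_add]
  ring

lemma Bk_ne_zero (d : ℕ) [NeZero d] (i q : ZMod d × ZMod d) : Bk d i q ≠ 0 := by
  intro h
  have h2 : Bk d i q * ZMod.stdAddChar (i.1 * q.1 + i.2 * q.2) = 1 := by
    unfold Bk
    rw [← AddChar.map_add_eq_mul, neg_add_cancel, AddChar.map_zero_eq_one]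
  rw [h, zero_mul] at h2
  exact zero_ne_one h2

lemma sum1 (d : ℕ) [NeZero d] (t : ZMod d) :
    ∑ x : ZMod d, ZMod.stdAddChar (t * x) = if t = 0 then (d : ℂ) else 0 := by
  split_ifs with h
  · simp [h, AddChar.map_zero_eq_one, ZMod.card]
  · exact AddChar.sum_eq_zero_of_ne_one (ZMod.isPrimitive_stdAddChar d h)

lemma sumBk (d : ℕ) [NeZero d] (a : ZMod d × ZMod d) :
    ∑ i : ZMod d × ZMod d, Bk d i a = if a = 0 then ((d : ℂ))^2 else 0 := by
  have key : ∀ i : ZMod d × ZMod d, Bk d i a =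
      ZMod.stdAddChar ((-a.1) * i.1) * ZMod.stdAddChar ((-a.2) * i.2) := by
    intro i
    unfold Bk
    rw [← AddChar.map_add_eq_mul]
    congr 1; ring
  simp_rw [key]
  rw [Fintype.sum_prod_type]
  dsimp only
  rw [← Finset.sum_mul_sum, sum1, sum1]
  by_cases h1 : a.1 = 0 <;> by_cases h2 : a.2 = 0 <;>
    simp [h1, h2, Prod.ext_iff, sq]

lemma F2Mat_eq (d : ℕ) [NeZero d] (i q : ZMod d × ZMod d) :
    F2Mat d i q = ((d : ℂ))⁻¹ * Bk d i q := by
  unfold F2Mat Bk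
  have : -((i.1 * q.1 + i.2 * q.2)) =
      (((-((i.1.val : ℤ) * (q.1.val : ℤ) + (i.2.val : ℤ) * (q.2.val : ℤ))) : ℤ) : ZMod d) := by
    push_cast
    simp [ZMod.natCast_val, ZMod.intCast_cast]
  rw [Matrix.of_apply, this, ZMod.stdAddChar_coe]
  push_cast
  ring_nf

/-- Characterization of full-spark for row submatrices of `F2Mat`. -/
def Pspark (d : ℕ) [NeZero d] (T : Finset (ZMod d × ZMod d)) : Prop :=
  ∀ S : Finset (ZMod d × ZMod d), S.card = T.card →
    ∀ x : ZMod d × ZMod d → ℂ, (∀ q, q ∉ S → x q = 0) →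
      (∀ i ∈ T, ∑ q : ZMod d × ZMod d, Bk d i q * x q = 0) → ∀ q, x q = 0

lemma sum_ext_supported (d : ℕ) [NeZero d] (S : Finset (ZMod d × ZMod d))
    (x : ZMod d × ZMod d → ℂ) (hx : ∀ q, q ∉ S → x q = 0) (f : ZMod d × ZMod d → ℂ) :
    ∑ k : S, f k * x k = ∑ q : ZMod d × ZMod d, f q * x q := by
  rw [Finset.sum_coe_sort S (fun q => f q * x q)]
  exact Finset.sum_subset (Finset.subset_univ S)
    (fun q _ hq => by rw [hx q hq, mul_zero])

lemma FS_iff (d : ℕ) [NeZero d] (T : Finset (ZMod d × ZMod d)) :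
    FullSpark (Matrix.of fun (r : ↥T) (q : ZMod d × ZMod d) => F2Mat d r.1 q) ↔
      Pspark d T := by
  have hd : (d : ℂ) ≠ 0 := Nat.cast_ne_zero.mpr (NeZero.ne d)
  constructor
  · intro h S hS x hx htr
    have h' := h S (by rw [hS, Fintype.card_coe])
    rw [Fintype.linearIndependent_iff] at h'
    have hz : ∀ k : S, x k = 0 := by
      apply h' (fun k => x k)
      funext i
      simp only [Finset.sum_apply, Pi.smul_apply, Pi.zero_apply, smul_eq_mul, Matrix.of_apply]
      have : ∀ k : S, x k * F2Mat d i.1 k = (d : ℂ)⁻¹ * (Bk d i.1 k * x k) := by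
        intro k; rw [F2Mat_eq]; ring
      rw [Finset.sum_congr rfl (fun k _ => this k), ← Finset.mul_sum,
        sum_ext_supported d S x hx (fun q => Bk d i.1 q), htr i.1 i.2, mul_zero]
    intro q
    by_cases hq : q ∈ S
    · exact hz ⟨q, hq⟩
    · exact hx q hq
  · intro h S hS
    rw [Fintype.linearIndependent_iff]
    intro g hg k
    classical
    set x : ZMod d × ZMod d → ℂ := fun q => if hq : q ∈ S then g ⟨q, hq⟩ else 0 with hxdef
    have hx : ∀ q, q ∉ S → x q = 0 := fun q hq => by simp [hxdef, hq]
    have hxk : ∀ k : S, x k = g k := fun k => by simp [hxdef, k.2]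
    have htr : ∀ i ∈ T, ∑ q : ZMod d × ZMod d, Bk d i q * x q = 0 := by
      intro i hi
      have := congrFun hg ⟨i, hi⟩
      simp only [Finset.sum_apply, Pi.smul_apply, Pi.zero_apply, smul_eq_mul,
        Matrix.of_apply] at this
      have e1 : (d : ℂ)⁻¹ * ∑ q : ZMod d × ZMod d, Bk d i q * x q
          = ∑ k : S, g k * F2Mat d i k := by
        rw [← sum_ext_supported d S x hx (fun q => Bk d i q), Finset.mul_sum]
        apply Finset.sum_congr rfl
        intro k _
        rw [F2Mat_eq, hxk k]; ring
      rw [← e1] at this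
      exact (mul_eq_zero.mp this).resolve_left (inv_ne_zero hd)
    have := h S (by rw [hS, Fintype.card_coe]) x hx htr
    rw [← hxk k]
    exact this k

/-- Transposed form of `Pspark`. -/
lemma Pspark_transpose (d : ℕ) [NeZero d] (T : Finset (ZMod d × ZMod d))
    (hP : Pspark d T) :
    ∀ V : Finset (ZMod d × ZMod d), V.card = T.card →
      ∀ w : ZMod d × ZMod d → ℂ, (∀ i, i ∉ T → w i = 0) →
        (∀ q ∈ V, ∑ i : ZMod d × ZMod d, Bk d i q * w i = 0) → ∀ i, w i = 0 := by
  classical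
  intro V hV w hw hvan
  have hcard : Fintype.card ↥T = Fintype.card ↥V := by
    rw [Fintype.card_coe, Fintype.card_coe, hV]
  let ε : ↥T ≃ ↥V := Fintype.equivOfCardEq hcard
  set A : Matrix ↥T ↥T ℂ := Matrix.of (fun i j => Bk d i.1 (ε j).1) with hA
  have hdet : A.det ≠ 0 := by
    intro hd0
    obtain ⟨v, hv0, hAv⟩ := (Matrix.exists_mulVec_eq_zero_iff).mpr hd0
    set x : ZMod d × ZMod d → ℂ :=
      fun q => if hq : q ∈ V then v (ε.symm ⟨q, hq⟩) else 0 with hxdef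
    have hx : ∀ q, q ∉ V → x q = 0 := fun q hq => by simp [hxdef, hq]
    have htr : ∀ i ∈ T, ∑ q : ZMod d × ZMod d, Bk d i q * x q = 0 := by
      intro i hi
      rw [← sum_ext_supported d V x hx (fun q => Bk d i q)]
      have := congrFun hAv ⟨i, hi⟩
      rw [Matrix.mulVec, dotProduct] at this
      simp only [Pi.zero_apply] at this
      rw [← Equiv.sum_comp ε (fun k : ↥V => Bk d i k.1 * x k.1)]
      rw [← this]
      apply Finset.sum_congr rfl
      intro j _
      have hxj : x (ε j).1 = v j := by
        simp only [hxdef]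
        rw [dif_pos (ε j).2]
        congr 1
        simp
      rw [hxj, hA]
      rfl
    have hx0 := hP V hV x hx htr
    apply hv0
    funext j
    have := hx0 (ε j).1
    simp only [hxdef] at this
    rw [dif_pos (ε j).2] at this
    simpa using this
  have hdetT : Aᵀ.det ≠ 0 := by rwa [Matrix.det_transpose]
  set v : ↥T → ℂ := fun i => w i.1 with hv
  have hAv : Aᵀ *ᵥ v = 0 := by
    funext j
    simp only [Pi.zero_apply]
    rw [Matrix.mulVec, dotProduct]
    have : ∀ i : ↥T, Aᵀ j i * v i = Bk d i.1 (ε j).1 * w i.1 := by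
      intro i; rfl
    rw [Finset.sum_congr rfl (fun i _ => this i)]
    rw [sum_ext_supported d T w hw (fun i => Bk d i (ε j).1)]
    exact hvan (ε j).1 (ε j).2
  have hv0 : v = 0 := by
    by_contra hne
    exact hdetT ((Matrix.exists_mulVec_eq_zero_iff).mp ⟨v, hne, hAv⟩)
  intro i
  by_cases hi : i ∈ T
  · exact congrFun hv0 ⟨i, hi⟩
  · exact hw i hi

lemma Pspark_translate (d : ℕ) [NeZero d] (Ω : Finset (ZMod d × ZMod d))
    (hP : Pspark d Ω) (s p : ZMod d) :
    Pspark d (Ω.image fun x => (x.1 + s, x.2 + p)) := by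
  intro S hS x hx htr
  have hinj : Function.Injective (fun x : ZMod d × ZMod d => (x.1 + s, x.2 + p)) := by
    intro a b hab
    simp only [Prod.mk.injEq, add_left_inj] at hab
    exact Prod.ext hab.1 hab.2
  have hcard : (Ω.image fun x => (x.1 + s, x.2 + p)).card = Ω.card :=
    Finset.card_image_of_injective Ω hinj
  set x' : ZMod d × ZMod d → ℂ := fun q => Bk d (s, p) q * x q with hx'def
  have hx' : ∀ q, q ∉ S → x' q = 0 := fun q hq => by rw [hx'def]; simp [hx q hq]
  have htr' : ∀ a ∈ Ω, ∑ q : ZMod d × ZMod d, Bk d a q * x' q = 0 := by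
    intro a ha
    have h1 := htr (a.1 + s, a.2 + p)
      (Finset.mem_image_of_mem (fun x => (x.1 + s, x.2 + p)) ha)
    rw [← h1]
    apply Finset.sum_congr rfl
    intro q _
    have : (a.1 + s, a.2 + p) = a + (s, p) := rfl
    rw [this, Bk_add_left]
    ring
  have := hP S (hS.trans hcard) x' hx' htr'
  intro q
  have h2 := this q
  rw [hx'def] at h2
  exact (mul_eq_zero.mp h2).resolve_left (Bk_ne_zero d (s, p) q)

lemma Pspark_dilate (d : ℕ) [NeZero d] (Ω : Finset (ZMod d × ZMod d))
    (hP : Pspark d Ω) (c₁ c₂ : ZMod d) (h₁ : Nat.gcd c₁.val d = 1)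
    (h₂ : Nat.gcd c₂.val d = 1) :
    Pspark d (Ω.image fun x => (c₁ * x.1, c₂ * x.2)) := by
  classical
  intro S hS x hx htr
  set u₁ : (ZMod d)ˣ := ZMod.unitOfCoprime c₁.val h₁ with hu₁
  set u₂ : (ZMod d)ˣ := ZMod.unitOfCoprime c₂.val h₂ with hu₂
  have hc₁ : (u₁ : ZMod d) = c₁ := by
    rw [hu₁, ZMod.coe_unitOfCoprime]; exact ZMod.natCast_rightInverse c₁
  have hc₂ : (u₂ : ZMod d) = c₂ := by
    rw [hu₂, ZMod.coe_unitOfCoprime]; exact ZMod.natCast_rightInverse c₂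
  set σ : (ZMod d × ZMod d) ≃ (ZMod d × ZMod d) :=
    Equiv.prodCongr (Units.mulLeft u₁) (Units.mulLeft u₂) with hσ
  have hσap : ∀ q : ZMod d × ZMod d, σ q = (c₁ * q.1, c₂ * q.2) := by
    intro q
    simp [hσ, Units.mulLeft, hc₁, hc₂, Prod.map]
  have hcard : (Ω.image fun x => (c₁ * x.1, c₂ * x.2)).card = Ω.card := by
    have : (fun x : ZMod d × ZMod d => (c₁ * x.1, c₂ * x.2)) = σ := by
      funext q; rw [hσap]
    rw [this]
    exact Finset.card_image_of_injective Ω σ.injective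
  set S' : Finset (ZMod d × ZMod d) := S.image σ with hS'
  have hS'card : S'.card = Ω.card := by
    rw [hS', Finset.card_image_of_injective S σ.injective, hS, hcard]
  set x' : ZMod d × ZMod d → ℂ := fun q => x (σ.symm q) with hx'def
  have hx' : ∀ q, q ∉ S' → x' q = 0 := by
    intro q hq
    rw [hx'def]
    apply hx
    intro hmem
    exact hq (by rw [hS']; exact (Finset.mem_image).mpr ⟨σ.symm q, hmem, by simp⟩)
  have htr' : ∀ a ∈ Ω, ∑ q : ZMod d × ZMod d, Bk d a q * x' q = 0 := by
    intro a ha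
    have h1 := htr (c₁ * a.1, c₂ * a.2)
      (Finset.mem_image_of_mem (fun x => (c₁ * x.1, c₂ * x.2)) ha)
    rw [← h1]
    rw [← Equiv.sum_comp σ (fun q => Bk d a q * x' q)]
    apply Finset.sum_congr rfl
    intro q _
    have hBk : Bk d a (σ q) = Bk d (c₁ * a.1, c₂ * a.2) q := by
      rw [hσap]
      unfold Bk
      congr 1
      ring
    rw [hBk, hx'def]
    simp
  have := hP S' hS'card x' hx' htr'
  intro q
  have h2 := this (σ q)
  rw [hx'def] at h2
  simpa using h2

lemma Pspark_compl (d : ℕ) [NeZero d] (Ω : Finset (ZMod d × ZMod d))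
    (hP : Pspark d Ω) : Pspark d Ωᶜ := by
  classical
  intro S hS x hx htr
  have hd2 : ((d : ℂ))^2 ≠ 0 := pow_ne_zero 2 (Nat.cast_ne_zero.mpr (NeZero.ne d))
  set y : ZMod d × ZMod d → ℂ := fun i => ∑ q : ZMod d × ZMod d, Bk d i q * x q with hydef
  have hy : ∀ i, i ∉ Ω → y i = 0 := fun i hi => htr i (Finset.mem_compl.mpr hi)
  have key : ∀ q' : ZMod d × ZMod d,
      ∑ i : ZMod d × ZMod d, Bk d i q' * y i = ((d : ℂ))^2 * x (-q') := by
    intro q'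
    have e1 : ∀ i : ZMod d × ZMod d, Bk d i q' * y i
        = ∑ q : ZMod d × ZMod d, Bk d i (q' + q) * x q := by
      intro i
      rw [hydef, Finset.mul_sum]
      apply Finset.sum_congr rfl
      intro q _
      rw [Bk_symm d i (q' + q), Bk_add_left, Bk_symm d q' i, Bk_symm d q i]
      ring
    rw [Finset.sum_congr rfl (fun i _ => e1 i), Finset.sum_comm]
    have e2 : ∀ q : ZMod d × ZMod d,
        ∑ i : ZMod d × ZMod d, Bk d i (q' + q) * x q
        = (if q = -q' then ((d : ℂ))^2 else 0) * x q := by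
      intro q
      rw [← Finset.sum_mul, sumBk]
      have hcond : (q' + q = 0) ↔ (q = -q') := by
        rw [add_comm, add_eq_zero_iff_eq_neg]
      simp only [hcond]
    rw [Finset.sum_congr rfl (fun q _ => e2 q)]
    simp [Finset.sum_ite_eq']
  set V : Finset (ZMod d × ZMod d) := Sᶜ.image (fun q => -q) with hVdef
  have hVcard : V.card = Ω.card := by
    rw [hVdef, Finset.card_image_of_injective _ neg_injective, Finset.card_compl, hS,
      Finset.card_compl]
    have h1 : Ω.card ≤ Fintype.card (ZMod d × ZMod d) := Finset.card_le_univ Ω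
    omega
  have hvan : ∀ q' ∈ V, ∑ i : ZMod d × ZMod d, Bk d i q' * y i = 0 := by
    intro q' hq'
    rw [key]
    obtain ⟨a, ha, rfl⟩ := Finset.mem_image.mp (by rwa [hVdef] at hq')
    rw [neg_neg, hx a (Finset.mem_compl.mp ha), mul_zero]
  have hy0 := Pspark_transpose d Ω hP V hVcard y hy hvan
  intro q
  have := key (-q)
  rw [neg_neg] at this
  have hz : ∑ i : ZMod d × ZMod d, Bk d i (-q) * y i = 0 := by
    apply Finset.sum_eq_zero
    intro i _
    rw [hy0 i, mul_zero]
  rw [hz] at this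
  exact ((mul_eq_zero.mp this.symm).resolve_left hd2)

/-- if the row submatrix of `F_d ⊗ F_d` indexed by `Ω` is full spark, then
so are the row submatrices indexed by (1) any translate `Ω + (s,p)`, (2) any dilate
`(c₁, c₂)Ω` with `c₁, c₂` coprime to `d`, and (3) the complement of `Ω`. -/
theorem stmt15 (d : ℕ) [NeZero d] (Ω : Finset (ZMod d × ZMod d))
    (h : FullSpark (Matrix.of fun (r : ↥Ω) (q : ZMod d × ZMod d) => F2Mat d r.1 q)) :
    (∀ s p : ZMod d,
      FullSpark (Matrix.of
        fun (r : ↥(Ω.image fun x => (x.1 + s, x.2 + p))) (q : ZMod d × ZMod d) =>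
          F2Mat d r.1 q)) ∧
    (∀ c₁ c₂ : ZMod d, Nat.gcd c₁.val d = 1 → Nat.gcd c₂.val d = 1 →
      FullSpark (Matrix.of
        fun (r : ↥(Ω.image fun x => (c₁ * x.1, c₂ * x.2))) (q : ZMod d × ZMod d) =>
          F2Mat d r.1 q)) ∧
    FullSpark (Matrix.of fun (r : ↥(Ωᶜ)) (q : ZMod d × ZMod d) => F2Mat d r.1 q) := by
  rw [FS_iff] at h
  refine ⟨?_, ?_, ?_⟩
  · intro s p
    exact (FS_iff d _).mpr (Pspark_translate d Ω h s p)
  · intro c₁ c₂ h₁ h₂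
    exact (FS_iff d _).mpr (Pspark_dilate d Ω h c₁ c₂ h₁ h₂)
  · exact (FS_iff d _).mpr (Pspark_compl d Ω h)
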